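/- Let D = {0,1} be the two-point discrete space. Then the sequence (ℬ_n) converges in ∏_{S(H(D))} ℝ (with the product topology) to η_{H(D)}(η_D(0)); equivalently, for every continuous Φ : H(D) → ℝ and all 0 ≤ a < b ≤ 1, one has (1/(b−a)) ∫_a^b Φ(B_n(t)) dt → Φ(η_D(0)) as n → ∞. -/

import Mathlib

open scoped Topology

/-- The index set `S(X)`: triples `(φ, a, b)` with `φ : X → ℝ` continuous and
`0 ≤ a < b ≤ 1`. -/
structure SIdx (X : Type u) [TopologicalSpace X] : Type u where
  φ : C(X, ℝ)
  a : ℝ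
  b : ℝ
  ha : 0 ≤ a
  hab : a < b
  hb : b ≤ 1

/-- `α : ℝ → X` is a step function on `[0,1)`: there is a partition
`0 = t 0 < t 1 < ⋯ < t k = 1` with `α` constant on each `[t j, t (j+1))`. -/
def IsStep {X : Type u} (α : ℝ → X) : Prop :=
  ∃ (k : ℕ) (t : ℕ → ℝ), 1 ≤ k ∧ t 0 = 0 ∧ t k = 1 ∧ (∀ j < k, t j < t (j + 1)) ∧
    ∀ j < k, ∀ s ∈ Set.Ico (t j) (t (j + 1)), α s = α (t j)

/-- The embedding `e_X`, sending `α` to the point of `∏_{S(X)} ℝ` whose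
`(φ, a, b)`-coordinate is `(1/(b-a)) ∫_a^b φ(α t) dt`. -/
noncomputable def eHM {X : Type u} [TopologicalSpace X] (α : ℝ → X) : SIdx X → ℝ :=
  fun s => (1 / (s.b - s.a)) * ∫ t in s.a..s.b, s.φ (α t)

/-- `H(X)` as a subset of `∏_{S(X)} ℝ`: the closure of the image under `e_X`
of the set of step functions. -/
def HSet (X : Type u) [TopologicalSpace X] : Set (SIdx X → ℝ) :=
  closure (eHM '' {α : ℝ → X | IsStep α})

/-- `H(X)` as a topological space (subspace of the product `∏_{S(X)} ℝ`). -/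
abbrev HSp (X : Type u) [TopologicalSpace X] : Type u := ↥(HSet X)

/-- `H_X(A)`: the closure of the image under `e_X` of the step functions taking
values in `A` on `[0,1)`. -/
def HSetOn (X : Type u) [TopologicalSpace X] (A : Set X) : Set (SIdx X → ℝ) :=
  closure (eHM '' {α : ℝ → X | IsStep α ∧ ∀ t ∈ Set.Ico (0:ℝ) 1, α t ∈ A})

/-- The support of `ν`: the intersection of all closed `A ⊆ X` with `ν ∈ H_X(A)`. -/
def suppH {X : Type u} [TopologicalSpace X] (ν : SIdx X → ℝ) : Set X :=
  ⋂₀ {A : Set X | IsClosed A ∧ ν ∈ HSetOn X A}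

/-- The reindexing map `R_f : ∏_{S(X)} ℝ → ∏_{S(Y)} ℝ`, `R_f x (ψ,a,b) = x (ψ∘f,a,b)`. -/
def reindex {X : Type u} {Y : Type v} [TopologicalSpace X] [TopologicalSpace Y]
    (f : C(X, Y)) : (SIdx X → ℝ) → (SIdx Y → ℝ) :=
  fun x s => x ⟨s.φ.comp f, s.a, s.b, s.ha, s.hab, s.hb⟩

lemma isStep_comp {X : Type u} {Y : Type v} (f : X → Y) {α : ℝ → X} (h : IsStep α) :
    IsStep (f ∘ α) := by
  obtain ⟨k, t, hk, h0, h1, hm, hc⟩ := h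
  exact ⟨k, t, hk, h0, h1, hm, fun j hj s hs => congrArg f (hc j hj s hs)⟩

lemma isStep_const {X : Type u} (x : X) : IsStep (fun _ : ℝ => x) :=
  ⟨1, fun j => (j : ℝ), le_refl 1, by simp, by simp,
    fun j _ => by simp, fun _ _ _ _ => rfl⟩

/-- The point `e_X(α)` of `H(X)`, for a step function `α`. -/
noncomputable def toH {X : Type u} [TopologicalSpace X] (α : ℝ → X) (h : IsStep α) : HSp X :=
  ⟨eHM α, subset_closure ⟨α, h, rfl⟩⟩

lemma continuous_reindex {X : Type u} {Y : Type v} [TopologicalSpace X] [TopologicalSpace Y]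
    (f : C(X, Y)) : Continuous (reindex f) :=
  continuous_pi fun _ => continuous_apply _

lemma reindex_mapsTo {X : Type u} {Y : Type v} [TopologicalSpace X] [TopologicalSpace Y]
    (f : C(X, Y)) : Set.MapsTo (reindex f) (HSet X) (HSet Y) := by
  intro x hx
  have h2 := image_closure_subset_closure_image (s := eHM '' {α : ℝ → X | IsStep α})
    (continuous_reindex f)
  have h3 : reindex f '' (eHM '' {α : ℝ → X | IsStep α}) ⊆ eHM '' {α : ℝ → Y | IsStep α} := by
    rintro _ ⟨_, ⟨α, hα, rfl⟩, rfl⟩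
    exact ⟨f ∘ α, isStep_comp f hα, rfl⟩
  exact closure_mono h3 (h2 ⟨x, hx, rfl⟩)

/-- The map `H(f) : H(X) → H(Y)` induced by a continuous `f : X → Y`, i.e. the
restriction of the reindexing map `R_f`. -/
noncomputable def Hmap {X : Type u} {Y : Type v} [TopologicalSpace X] [TopologicalSpace Y]
    (f : C(X, Y)) : C(HSp X, HSp Y) where
  toFun x := ⟨reindex f x.1, reindex_mapsTo f x.2⟩
  continuous_toFun :=
    Continuous.subtype_mk ((continuous_reindex f).comp continuous_subtype_val) _

/-- The unit `η_X : X → H(X)`, `x ↦ e_X(const x)`. -/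
noncomputable def etaMap (X : Type u) [TopologicalSpace X] : C(X, HSp X) where
  toFun x := toH (fun _ : ℝ => x) (isStep_const x)
  continuous_toFun := by
    refine Continuous.subtype_mk (continuous_pi fun s => ?_) _
    simp only [eHM, intervalIntegral.integral_const]
    exact continuous_const.mul ((s.φ.continuous).const_smul (s.b - s.a))
/-- The index (0-based) of the subinterval `[i/n, (i+1)/n)` of `[0,1)` containing `s`
(as a natural number, clipped to `n - 1`). -/
noncomputable def stepIdxNat (n : ℕ) (s : ℝ) : ℕ := min ⌊s * n⌋₊ (n - 1)

lemma stepIdxNat_eq {n j : ℕ} (hj : j < n) {s : ℝ}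
    (h1 : (j : ℝ) / n ≤ s) (h2 : s < ((j : ℝ) + 1) / n) : stepIdxNat n s = j := by
  have hn : (0:ℝ) < n := by
    have : 0 < n := by omega
    exact_mod_cast this
  have h1' : (j : ℝ) ≤ s * n := by rw [div_le_iff₀ hn] at h1; exact h1
  have h2' : s * n < (j : ℝ) + 1 := by rw [lt_div_iff₀ hn] at h2; exact h2
  have hfl : ⌊s * n⌋₊ = j := by
    rw [Nat.floor_eq_iff (le_trans (Nat.cast_nonneg j) h1')]
    exact ⟨h1', h2'⟩
  unfold stepIdxNat
  omega

lemma isStep_stepIdxNat (n : ℕ) : IsStep (stepIdxNat n) := by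
  rcases Nat.eq_zero_or_pos n with rfl | hn
  · exact ⟨1, fun j => (j : ℝ), le_refl 1, by simp, by simp, fun j _ => by simp,
      fun j hj s hs => by simp [stepIdxNat]⟩
  · have hnR : (0:ℝ) < n := by exact_mod_cast hn
    refine ⟨n, fun j => (j : ℝ) / n, hn, by simp, by field_simp,
      fun j hj => ?_, fun j hj s hs => ?_⟩
    · exact (div_lt_div_iff_of_pos_right hnR).mpr (by push_cast; linarith)
    · obtain ⟨hs1, hs2⟩ := hs
      have hs2' : s < ((j : ℝ) + 1) / n := by
        convert hs2 using 2 <;> first | rfl | (push_cast; ring)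
      rw [stepIdxNat_eq hj hs1 hs2',
        stepIdxNat_eq hj (le_refl _) ((div_lt_div_iff_of_pos_right hnR).mpr (by linarith))]
/-- The step function `β : [0,1) → K_n`, `β(s) = i` for `s ∈ [i/n, (i+1)/n)`,
with `K_n` realized as `Fin n` (0-based indexing). -/
noncomputable def stepIdx (n : ℕ) [NeZero n] (s : ℝ) : Fin n :=
  ⟨stepIdxNat n s, by
    have := NeZero.ne n
    unfold stepIdxNat
    omega⟩

lemma isStep_stepIdx (n : ℕ) [NeZero n] : IsStep (stepIdx n) := by
  have hn := NeZero.ne n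
  have h : stepIdx n =
      (fun m : ℕ => (⟨min m (n - 1), by omega⟩ : Fin n)) ∘ stepIdxNat n := by
    funext s
    apply Fin.ext
    simp [stepIdx, stepIdxNat, min_assoc]
  rw [h]
  exact isStep_comp _ (isStep_stepIdxNat n)

/-- The diagonal step function `α : [0,1) → K_n × K_n`, `α(s) = (i,i)` for
`s ∈ [i/n, (i+1)/n)`. -/
noncomputable def alphaDiag (n : ℕ) [NeZero n] : ℝ → Fin n × Fin n :=
  fun s => (stepIdx n s, stepIdx n s)

lemma isStep_alphaDiag (n : ℕ) [NeZero n] : IsStep (alphaDiag n) :=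
  isStep_comp (fun i : Fin n => (i, i)) (isStep_stepIdx n)

/-- The step function `α_i : [0,1) → K_n × K_n`, `α_i(s) = (i,j)` for
`s ∈ [j/n, (j+1)/n)`. -/
noncomputable def alphaRow (n : ℕ) [NeZero n] (i : Fin n) : ℝ → Fin n × Fin n :=
  fun s => (i, stepIdx n s)

lemma isStep_alphaRow (n : ℕ) [NeZero n] (i : Fin n) : IsStep (alphaRow n i) :=
  isStep_comp (fun j : Fin n => (i, j)) (isStep_stepIdx n)

/-- The step function `A_n : [0,1) → H(K_n × K_n)`, `A_n(s) = e(α_i)` for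
`s ∈ [i/n, (i+1)/n)`. -/
noncomputable def An (n : ℕ) [NeZero n] : ℝ → HSp (Fin n × Fin n) :=
  fun s => toH (alphaRow n (stepIdx n s)) (isStep_alphaRow n _)

lemma isStep_An (n : ℕ) [NeZero n] : IsStep (An n) :=
  isStep_comp (fun i : Fin n => toH (alphaRow n i) (isStep_alphaRow n i)) (isStep_stepIdx n)

/-- The step function `γ_i^{(n)} : [0,1) → D = {0,1}` which is `1` on
`[i/n, (i+1)/n)` and `0` elsewhere, with `D` realized as `Bool`. -/
noncomputable def gammaStep (n i : ℕ) : ℝ → Bool := fun s => decide (stepIdxNat n s = i)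

lemma isStep_gammaStep (n i : ℕ) : IsStep (gammaStep n i) :=
  isStep_comp (fun m : ℕ => decide (m = i)) (isStep_stepIdxNat n)

/-- The step function `B_n : [0,1) → H(D)`, `B_n(s) = e(γ_i^{(n)})` for
`s ∈ [i/n, (i+1)/n)`. -/
noncomputable def Bn (n : ℕ) : ℝ → HSp Bool :=
  fun s => toH (gammaStep n (stepIdxNat n s)) (isStep_gammaStep n _)

lemma isStep_Bn (n : ℕ) : IsStep (Bn n) :=
  isStep_comp (fun m : ℕ => toH (gammaStep n m) (isStep_gammaStep n m)) (isStep_stepIdxNat n)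

/-!
Each `e_D(γ_i^{(n)})` lies within `|φ 1 - φ 0| / (n (b - a))` of `η_D(0)` in the coordinate
`(φ, a, b)`, because `γ_i^{(n)}` differs from the constant `0` only on an interval of length `1/n`.
Hence `B_n → η_D(0)` uniformly on `[0, 1)`, and dominated convergence gives the convergence of
every coordinate of `ℬ_n`.
-/

open Filter MeasureTheory Set
open scoped Interval

section UniformLimit

/- `Tendsto (Function.uncurry f) (l ×ˢ ⊤) (𝓝 p)` says that `f i → p` uniformly, in any topological
space. -/

variable {ι : Type*} {l : Filter ι}

lemma tendsto_intervalIntegral_of_tendsto_uncurry [l.IsCountablyGenerated] {g : ι → ℝ → ℝ}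
    {c a b : ℝ} (hmeas : ∀ i, AEStronglyMeasurable (g i) (volume.restrict (Ι a b)))
    (hg : Tendsto (Function.uncurry g) (l ×ˢ ⊤) (𝓝 c)) :
    Tendsto (fun i => ∫ t in a..b, g i t) l (𝓝 ((b - a) * c)) := by
  have hbound : ∀ᶠ i in l, ∀ t, ‖g i t‖ ≤ ‖c‖ + 1 := by
    have := hg.norm.eventually (gt_mem_nhds (lt_add_one ‖c‖))
    simpa only [← principal_univ, eventually_prod_principal_iff, mem_univ, true_implies,
      Function.uncurry_apply_pair] using this.mono fun _ h => h.le
  have hlim : ∀ t, Tendsto (fun i => g i t) l (𝓝 c) := fun t =>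
    hg.comp (tendsto_id.prodMk tendsto_top)
  simpa [mul_comm] using intervalIntegral.tendsto_integral_filter_of_dominated_convergence
    (fun _ => ‖c‖ + 1) (Eventually.of_forall hmeas)
    (hbound.mono fun i hi => ae_of_all _ fun t _ => hi t) intervalIntegrable_const
    (ae_of_all _ fun t _ => hlim t)

lemma tendsto_eHM_of_tendsto_uncurry [l.IsCountablyGenerated] {X : Type*} [TopologicalSpace X]
    {f : ι → ℝ → X} {p : X} (hmeas : ∀ i (ψ : C(X, ℝ)), Measurable fun t => ψ (f i t))
    (hf : Tendsto (Function.uncurry f) (l ×ˢ ⊤) (𝓝 p)) :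
    Tendsto (fun i => eHM (f i)) l (𝓝 (eHM fun _ => p)) := by
  refine tendsto_pi_nhds.2 fun s => ?_
  have := tendsto_intervalIntegral_of_tendsto_uncurry (a := s.a) (b := s.b)
    (fun i => (hmeas i s.φ).aestronglyMeasurable) ((s.φ.continuous.tendsto p).comp hf)
  simpa [eHM, intervalIntegral.integral_const, smul_eq_mul] using this.const_mul (1 / (s.b - s.a))

end UniformLimit

lemma measurable_stepIdxNat (n : ℕ) : Measurable (stepIdxNat n) :=
  (Nat.measurable_floor.comp (measurable_id.mul_const _)).min measurable_const

lemma stepIdxNat_le_mul {n : ℕ} {t : ℝ} (ht : 0 ≤ t) : (stepIdxNat n t : ℝ) ≤ t * n :=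
  (Nat.cast_le.2 (min_le_left _ _)).trans (Nat.floor_le (by positivity))

lemma mul_le_stepIdxNat_add_one {n : ℕ} (hn : 1 ≤ n) {t : ℝ} (ht : t ≤ 1) :
    t * n ≤ stepIdxNat n t + 1 := by
  have hfloor : t * n ≤ ⌊t * n⌋₊ + 1 := (Nat.lt_floor_add_one _).le
  have hn' : t * n ≤ ((n - 1 : ℕ) : ℝ) + 1 := by
    rw [Nat.cast_sub hn, Nat.cast_one, sub_add_cancel]
    nlinarith [(Nat.cast_pos.2 hn : (0 : ℝ) < n)]
  rw [stepIdxNat, Nat.cast_min, ← min_add_add_right]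
  exact le_min hfloor hn'

lemma Icc_inter_stepIdxNat_preimage_subset {n : ℕ} (hn : 1 ≤ n) (i : ℕ) :
    Icc 0 1 ∩ stepIdxNat n ⁻¹' {i} ⊆ Icc ((i : ℝ) / n) ((i + 1) / n) := by
  rintro t ⟨⟨ht0, ht1⟩, rfl : stepIdxNat n t = i⟩
  have hn' : (0 : ℝ) < n := Nat.cast_pos.2 hn
  exact ⟨(div_le_iff₀ hn').2 (stepIdxNat_le_mul ht0),
    (le_div_iff₀ hn').2 (mul_le_stepIdxNat_add_one hn ht1)⟩

lemma volume_real_stepIdxNat_preimage_inter_Ioc_le {n : ℕ} (hn : 1 ≤ n) (i : ℕ) {a b : ℝ}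
    (ha : 0 ≤ a) (hb : b ≤ 1) : volume.real (stepIdxNat n ⁻¹' {i} ∩ Ioc a b) ≤ 1 / n := by
  have hsub : stepIdxNat n ⁻¹' {i} ∩ Ioc a b ⊆ Icc ((i : ℝ) / n) ((i + 1) / n) :=
    fun t ⟨hi, ht⟩ => Icc_inter_stepIdxNat_preimage_subset hn i
      ⟨⟨ha.trans ht.1.le, ht.2.trans hb⟩, hi⟩
  refine (measureReal_mono hsub measure_Icc_lt_top.ne).trans_eq ?_
  rw [Real.volume_real_Icc_of_le (by gcongr; linarith)]
  ring

lemma eHM_gammaStep_sub_eHM_false (x : SIdx Bool) (n i : ℕ) :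
    eHM (gammaStep n i) x - eHM (fun _ => false) x =
      (x.φ true - x.φ false) * volume.real (stepIdxNat n ⁻¹' {i} ∩ Ioc x.a x.b) /
        (x.b - x.a) := by
  set S := stepIdxNat n ⁻¹' {i}
  have hS : MeasurableSet S := measurable_stepIdxNat n (measurableSet_singleton i)
  have hsplit : (fun t => x.φ (gammaStep n i t)) =
      fun t => x.φ false + S.indicator (fun _ => x.φ true - x.φ false) t := by
    funext t
    by_cases ht : stepIdxNat n t = i <;> simp [gammaStep, S, ht]
  have hab := x.hab
  have hint : ∫ t in x.a..x.b, x.φ (gammaStep n i t) =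
      (x.b - x.a) * x.φ false + volume.real (S ∩ Ioc x.a x.b) * (x.φ true - x.φ false) := by
    rw [hsplit, intervalIntegral.integral_of_le hab.le,
      integral_add (integrable_const _) ((integrable_const _).indicator hS),
      integral_indicator_const _ hS]
    simp [measureReal_restrict_apply hS, hab.le, smul_eq_mul]
  simp only [eHM, hint, intervalIntegral.integral_const, smul_eq_mul]
  field_simp
  ring

lemma tendsto_toH_gammaStep :
    Tendsto (fun q : ℕ × ℕ => toH (gammaStep q.1 q.2) (isStep_gammaStep _ _)) (atTop ×ˢ ⊤)
      (𝓝 (etaMap Bool false)) := by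
  refine tendsto_subtype_rng.2 <| tendsto_pi_nhds.2 fun x => ?_
  have hba : 0 < x.b - x.a := sub_pos.2 x.hab
  set C := |x.φ true - x.φ false| / (x.b - x.a)
  have hbound : ∀ q : ℕ × ℕ, 1 ≤ q.1 →
      ‖eHM (gammaStep q.1 q.2) x - eHM (fun _ => false) x‖ ≤ C / q.1 := by
    intro q hn
    rw [eHM_gammaStep_sub_eHM_false, Real.norm_eq_abs, abs_div, abs_mul, abs_of_pos hba,
      abs_of_nonneg measureReal_nonneg, mul_div_right_comm, div_eq_mul_one_div C]
    gcongr
    exact volume_real_stepIdxNat_preimage_inter_Ioc_le hn q.2 x.ha x.hb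
  exact tendsto_iff_norm_sub_tendsto_zero.2 <|
    squeeze_zero' (Eventually.of_forall fun _ => norm_nonneg _)
      ((tendsto_fst.eventually (eventually_ge_atTop 1)).mono hbound)
      ((tendsto_const_div_atTop_nhds_zero_nat C).comp tendsto_fst)

lemma tendsto_uncurry_Bn :
    Tendsto (Function.uncurry Bn) (atTop ×ˢ ⊤) (𝓝 (etaMap Bool false)) := by
  have hBn : Function.uncurry Bn =
      (fun q : ℕ × ℕ => toH (gammaStep q.1 q.2) (isStep_gammaStep _ _)) ∘
        fun q : ℕ × ℝ => (q.1, stepIdxNat q.1 q.2) := rfl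
  rw [hBn]
  exact tendsto_toH_gammaStep.comp (tendsto_fst.prodMk tendsto_top)

lemma measurable_comp_Bn (n : ℕ) (ψ : C(HSp Bool, ℝ)) : Measurable fun t => ψ (Bn n t) :=
  (measurable_from_nat (f := fun m => ψ (toH (gammaStep n m) (isStep_gammaStep n m)))).comp
    (measurable_stepIdxNat n)

/-- The sequence `ℬ_n = e_{H(D)}(B_n)` converges in `∏_{S(H(D))} ℝ` to
`η_{H(D)}(η_D(0))`, with `D = {0,1}` realized as `Bool` (`0 = false`). -/
theorem Bn_tendsto_eta_eta_zero :
    Filter.Tendsto (fun n : ℕ => eHM (Bn n)) Filter.atTop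
      (nhds (eHM (fun _ : ℝ => etaMap Bool false))) :=
  tendsto_eHM_of_tendsto_uncurry measurable_comp_Bn tendsto_uncurry_Bn
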